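/- arXiv:1512.04400 — 2 statements merged into one kernel-verified Lean document; each statement's English description precedes it below -/
import Mathlib

section
/- Let X be the blow-up of P_3 along a line, viewed as the divisor of class s+H in P_1 × P_3, where the Chow ring of P_1 × P_3 is ℤ[s,H]/(s², H⁴) with s·H³ = 1, s² = 0, H⁴ = 0. Then the degeneracy class on X of a general map O(-s) ⊕ O(-H) ⊕ O(-s-H) → O^4 is the degree-2 part of 1/((1-st)(1-Ht)(1-(s+H)t)), namely 5sH + 3H². Consequently the degeneracy curve Γ satisfies Γ·H = 8 and Γ·s = 3. -/
open MvPolynomial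

/-- in the Chow ring `ℤ[s,H]/(s², H⁴)` of `ℙ₁ × ℙ₃` (containing the blow-up
`P̃₃` of `ℙ₃` along a line as the divisor of class `s + H`), the degree-2 part of
`1/((1-st)(1-Ht)(1-(s+H)t))`, namely
`s² + H² + (s+H)² + sH + s(s+H) + H(s+H)`, equals `5sH + 3H²`; this is the class of the
degeneracy curve `Γ` of a general map `O(-s) ⊕ O(-H) ⊕ O(-s-H) → O⁴`.  Consequently,
computing degrees in `ℙ₁ × ℙ₃` against the divisor class `s + H` (the point class of
`ℙ₁ × ℙ₃` being `s·H³`), one gets `Γ·H = 8` and `Γ·s = 3`. -/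
theorem degeneracy_class_trigonal_curve :
    letI I : Ideal (MvPolynomial (Fin 2) ℤ) := Ideal.span {X 0 ^ 2, X 1 ^ 4}
    letI q := Ideal.Quotient.mk I
    letI s := q (X 0)
    letI H := q (X 1)
    s ^ 2 + H ^ 2 + (s + H) ^ 2 + s * H + s * (s + H) + H * (s + H) =
        5 * (s * H) + 3 * H ^ 2 ∧
    (5 * (s * H) + 3 * H ^ 2) * H * (s + H) = 8 * (s * H ^ 3) ∧
    (5 * (s * H) + 3 * H ^ 2) * s * (s + H) = 3 * (s * H ^ 3) := by
  set I : Ideal (MvPolynomial (Fin 2) ℤ) := Ideal.span {X 0 ^ 2, X 1 ^ 4} with hI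
  set q := Ideal.Quotient.mk I with hq
  set s := q (X 0) with hs
  set H := q (X 1) with hH
  have h1 : s ^ 2 = 0 := by
    rw [hs, ← map_pow]
    exact Ideal.Quotient.eq_zero_iff_mem.2 (Ideal.subset_span (by simp))
  have h2 : H ^ 4 = 0 := by
    rw [hH, ← map_pow]
    exact Ideal.Quotient.eq_zero_iff_mem.2 (Ideal.subset_span (by simp))
  refine ⟨by linear_combination 3 * h1, by linear_combination 5 * H ^ 2 * h1 + 3 * h2,
    by linear_combination (5 * s * H + 8 * H ^ 2) * h1⟩
end

section
/- With the explicit 4×3 matrix G over ℂ[z₀,z₁,z₂,z₃] with columns (-z₁, z₀, 0, 0), (z₀, z₁, z₂, z₃), (-z₁²+z₀z₃, z₀²-z₁z₂, z₀z₁-z₁z₃, -z₀z₁+z₀z₂), the rational map P₃ ⇢ P₃ given by the four signed 3×3 maximal minors (Δ₁(G): -Δ₂(G): Δ₃(G): -Δ₄(G)) is a birational transformation of P₃ whose inverse is also given by quartic polynomials (the analogously-constructed minors from the transposed data); in particular the composite of the two quartic maps is the identity times a polynomial of degree 15. -/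
open MvPolynomial

set_option maxHeartbeats 1000000

noncomputable section

/-- The explicit `4×3` matrix `G` over `ℂ[z₀,z₁,z₂,z₃]` with rows
`(-z₁, z₀, -z₁²+z₀z₃)`, `(z₀, z₁, z₀²-z₁z₂)`, `(0, z₂, z₀z₁-z₁z₃)`,
`(0, z₃, -z₀z₁+z₀z₂)`. -/
def Gmat : Matrix (Fin 4) (Fin 3) (MvPolynomial (Fin 4) ℂ) :=
  !![-X 1, X 0, -X 1 ^ 2 + X 0 * X 3;
     X 0, X 1, X 0 ^ 2 - X 1 * X 2;
     0, X 2, X 0 * X 1 - X 1 * X 3;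
     0, X 3, -(X 0 * X 1) + X 0 * X 2]

/-- `Δₖ(G)`: the determinant of `G` with its `k`-th row removed. -/
def Gminor (k : Fin 4) : MvPolynomial (Fin 4) ℂ :=
  (Gmat.submatrix k.succAbove id).det

/-- The quartic map `(z₀:z₁:z₂:z₃) ⤳ (Δ₁(G) : -Δ₂(G) : Δ₃(G) : -Δ₄(G))`. -/
def Gphi : Fin 4 → MvPolynomial (Fin 4) ℂ :=
  ![Gminor 0, -Gminor 1, Gminor 2, -Gminor 3]

def psi0 : MvPolynomial (Fin 4) ℂ :=
    C (1 : ℂ) * X 0 ^ 3 * X 1 ^ 0 * X 2 ^ 1 * X 3 ^ 0 +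
    C (-1 : ℂ) * X 0 ^ 2 * X 1 ^ 0 * X 2 ^ 0 * X 3 ^ 2 +
    C (1 : ℂ) * X 0 ^ 1 * X 1 ^ 2 * X 2 ^ 0 * X 3 ^ 1 +
    C (-1 : ℂ) * X 0 ^ 1 * X 1 ^ 1 * X 2 ^ 2 * X 3 ^ 0

def psi1 : MvPolynomial (Fin 4) ℂ :=
    C (1 : ℂ) * X 0 ^ 2 * X 1 ^ 1 * X 2 ^ 1 * X 3 ^ 0 +
    C (-1 : ℂ) * X 0 ^ 1 * X 1 ^ 1 * X 2 ^ 0 * X 3 ^ 2 +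
    C (1 : ℂ) * X 0 ^ 0 * X 1 ^ 3 * X 2 ^ 0 * X 3 ^ 1 +
    C (-1 : ℂ) * X 0 ^ 0 * X 1 ^ 2 * X 2 ^ 2 * X 3 ^ 0

def psi2 : MvPolynomial (Fin 4) ℂ :=
    C (-1 : ℂ) * X 0 ^ 4 * X 1 ^ 0 * X 2 ^ 0 * X 3 ^ 0 +
    C (-1 : ℂ) * X 0 ^ 2 * X 1 ^ 2 * X 2 ^ 0 * X 3 ^ 0 +
    C (1 : ℂ) * X 0 ^ 2 * X 1 ^ 1 * X 2 ^ 1 * X 3 ^ 0 +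
    C (1 : ℂ) * X 0 ^ 2 * X 1 ^ 1 * X 2 ^ 0 * X 3 ^ 1 +
    C (-1 : ℂ) * X 0 ^ 1 * X 1 ^ 2 * X 2 ^ 0 * X 3 ^ 1 +
    C (1 : ℂ) * X 0 ^ 1 * X 1 ^ 1 * X 2 ^ 1 * X 3 ^ 1 +
    C (-1 : ℂ) * X 0 ^ 1 * X 1 ^ 1 * X 2 ^ 0 * X 3 ^ 2 +
    C (1 : ℂ) * X 0 ^ 0 * X 1 ^ 3 * X 2 ^ 1 * X 3 ^ 0

def psi3 : MvPolynomial (Fin 4) ℂ :=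
    C (1 : ℂ) * X 0 ^ 3 * X 1 ^ 0 * X 2 ^ 0 * X 3 ^ 1 +
    C (-1 : ℂ) * X 0 ^ 2 * X 1 ^ 2 * X 2 ^ 0 * X 3 ^ 0 +
    C (-1 : ℂ) * X 0 ^ 2 * X 1 ^ 1 * X 2 ^ 1 * X 3 ^ 0 +
    C (1 : ℂ) * X 0 ^ 1 * X 1 ^ 2 * X 2 ^ 1 * X 3 ^ 0 +
    C (1 : ℂ) * X 0 ^ 1 * X 1 ^ 2 * X 2 ^ 0 * X 3 ^ 1 +
    C (-1 : ℂ) * X 0 ^ 1 * X 1 ^ 1 * X 2 ^ 2 * X 3 ^ 0 +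
    C (1 : ℂ) * X 0 ^ 1 * X 1 ^ 1 * X 2 ^ 1 * X 3 ^ 1 +
    C (-1 : ℂ) * X 0 ^ 0 * X 1 ^ 4 * X 2 ^ 0 * X 3 ^ 0

def hp0 : MvPolynomial (Fin 4) ℂ :=
    C (-1 : ℂ) * X 0 ^ 9 * X 1 ^ 4 * X 2 ^ 2 * X 3 ^ 0 +
    C (-2 : ℂ) * X 0 ^ 9 * X 1 ^ 4 * X 2 ^ 1 * X 3 ^ 1 +
    C (-1 : ℂ) * X 0 ^ 9 * X 1 ^ 4 * X 2 ^ 0 * X 3 ^ 2 +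
    C (2 : ℂ) * X 0 ^ 9 * X 1 ^ 3 * X 2 ^ 3 * X 3 ^ 0 +
    C (2 : ℂ) * X 0 ^ 9 * X 1 ^ 3 * X 2 ^ 2 * X 3 ^ 1 +
    C (-1 : ℂ) * X 0 ^ 9 * X 1 ^ 2 * X 2 ^ 4 * X 3 ^ 0 +
    C (-1 : ℂ) * X 0 ^ 8 * X 1 ^ 5 * X 2 ^ 2 * X 3 ^ 0 +
    C (-2 : ℂ) * X 0 ^ 8 * X 1 ^ 5 * X 2 ^ 1 * X 3 ^ 1 +
    C (-1 : ℂ) * X 0 ^ 8 * X 1 ^ 5 * X 2 ^ 0 * X 3 ^ 2 +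
    C (5 : ℂ) * X 0 ^ 8 * X 1 ^ 4 * X 2 ^ 3 * X 3 ^ 0 +
    C (9 : ℂ) * X 0 ^ 8 * X 1 ^ 4 * X 2 ^ 2 * X 3 ^ 1 +
    C (7 : ℂ) * X 0 ^ 8 * X 1 ^ 4 * X 2 ^ 1 * X 3 ^ 2 +
    C (3 : ℂ) * X 0 ^ 8 * X 1 ^ 4 * X 2 ^ 0 * X 3 ^ 3 +
    C (-6 : ℂ) * X 0 ^ 8 * X 1 ^ 3 * X 2 ^ 4 * X 3 ^ 0 +
    C (-3 : ℂ) * X 0 ^ 8 * X 1 ^ 3 * X 2 ^ 3 * X 3 ^ 1 +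
    C (3 : ℂ) * X 0 ^ 8 * X 1 ^ 3 * X 2 ^ 2 * X 3 ^ 2 +
    C (3 : ℂ) * X 0 ^ 8 * X 1 ^ 3 * X 2 ^ 1 * X 3 ^ 3 +
    C (-9 : ℂ) * X 0 ^ 8 * X 1 ^ 2 * X 2 ^ 4 * X 3 ^ 1 +
    C (-7 : ℂ) * X 0 ^ 8 * X 1 ^ 2 * X 2 ^ 3 * X 3 ^ 2 +
    C (3 : ℂ) * X 0 ^ 8 * X 1 ^ 1 * X 2 ^ 6 * X 3 ^ 0 +
    C (5 : ℂ) * X 0 ^ 8 * X 1 ^ 1 * X 2 ^ 5 * X 3 ^ 1 +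
    C (-1 : ℂ) * X 0 ^ 8 * X 1 ^ 0 * X 2 ^ 7 * X 3 ^ 0

def hp1 : MvPolynomial (Fin 4) ℂ :=
    C (-2 : ℂ) * X 0 ^ 7 * X 1 ^ 6 * X 2 ^ 2 * X 3 ^ 0 +
    C (-4 : ℂ) * X 0 ^ 7 * X 1 ^ 6 * X 2 ^ 1 * X 3 ^ 1 +
    C (-2 : ℂ) * X 0 ^ 7 * X 1 ^ 6 * X 2 ^ 0 * X 3 ^ 2 +
    C (2 : ℂ) * X 0 ^ 7 * X 1 ^ 5 * X 2 ^ 3 * X 3 ^ 0 +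
    C (-2 : ℂ) * X 0 ^ 7 * X 1 ^ 5 * X 2 ^ 2 * X 3 ^ 1 +
    C (-4 : ℂ) * X 0 ^ 7 * X 1 ^ 5 * X 2 ^ 1 * X 3 ^ 2 +
    C (1 : ℂ) * X 0 ^ 7 * X 1 ^ 4 * X 2 ^ 4 * X 3 ^ 0 +
    C (5 : ℂ) * X 0 ^ 7 * X 1 ^ 4 * X 2 ^ 3 * X 3 ^ 1 +
    C (-10 : ℂ) * X 0 ^ 7 * X 1 ^ 4 * X 2 ^ 2 * X 3 ^ 2 +
    C (-15 : ℂ) * X 0 ^ 7 * X 1 ^ 4 * X 2 ^ 1 * X 3 ^ 3 +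
    C (-6 : ℂ) * X 0 ^ 7 * X 1 ^ 4 * X 2 ^ 0 * X 3 ^ 4 +
    C (1 : ℂ) * X 0 ^ 7 * X 1 ^ 3 * X 2 ^ 4 * X 3 ^ 1 +
    C (8 : ℂ) * X 0 ^ 7 * X 1 ^ 3 * X 2 ^ 3 * X 3 ^ 2 +
    C (-6 : ℂ) * X 0 ^ 7 * X 1 ^ 3 * X 2 ^ 2 * X 3 ^ 3 +
    C (-10 : ℂ) * X 0 ^ 7 * X 1 ^ 3 * X 2 ^ 1 * X 3 ^ 4 +
    C (-1 : ℂ) * X 0 ^ 7 * X 1 ^ 3 * X 2 ^ 0 * X 3 ^ 5 +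
    C (-1 : ℂ) * X 0 ^ 7 * X 1 ^ 2 * X 2 ^ 6 * X 3 ^ 0 +
    C (1 : ℂ) * X 0 ^ 7 * X 1 ^ 2 * X 2 ^ 5 * X 3 ^ 1 +
    C (7 : ℂ) * X 0 ^ 7 * X 1 ^ 2 * X 2 ^ 4 * X 3 ^ 2 +
    C (14 : ℂ) * X 0 ^ 7 * X 1 ^ 2 * X 2 ^ 3 * X 3 ^ 3 +
    C (2 : ℂ) * X 0 ^ 7 * X 1 ^ 2 * X 2 ^ 2 * X 3 ^ 4 +
    C (-1 : ℂ) * X 0 ^ 7 * X 1 ^ 1 * X 2 ^ 6 * X 3 ^ 1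

def hp2 : MvPolynomial (Fin 4) ℂ :=
    C (-4 : ℂ) * X 0 ^ 7 * X 1 ^ 1 * X 2 ^ 5 * X 3 ^ 2 +
    C (-1 : ℂ) * X 0 ^ 7 * X 1 ^ 1 * X 2 ^ 4 * X 3 ^ 3 +
    C (-2 : ℂ) * X 0 ^ 6 * X 1 ^ 7 * X 2 ^ 2 * X 3 ^ 0 +
    C (-4 : ℂ) * X 0 ^ 6 * X 1 ^ 7 * X 2 ^ 1 * X 3 ^ 1 +
    C (-2 : ℂ) * X 0 ^ 6 * X 1 ^ 7 * X 2 ^ 0 * X 3 ^ 2 +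
    C (8 : ℂ) * X 0 ^ 6 * X 1 ^ 6 * X 2 ^ 3 * X 3 ^ 0 +
    C (16 : ℂ) * X 0 ^ 6 * X 1 ^ 6 * X 2 ^ 2 * X 3 ^ 1 +
    C (16 : ℂ) * X 0 ^ 6 * X 1 ^ 6 * X 2 ^ 1 * X 3 ^ 2 +
    C (8 : ℂ) * X 0 ^ 6 * X 1 ^ 6 * X 2 ^ 0 * X 3 ^ 3 +
    C (-9 : ℂ) * X 0 ^ 6 * X 1 ^ 5 * X 2 ^ 4 * X 3 ^ 0 +
    C (-10 : ℂ) * X 0 ^ 6 * X 1 ^ 5 * X 2 ^ 3 * X 3 ^ 1 +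
    C (1 : ℂ) * X 0 ^ 6 * X 1 ^ 5 * X 2 ^ 2 * X 3 ^ 2 +
    C (12 : ℂ) * X 0 ^ 6 * X 1 ^ 5 * X 2 ^ 1 * X 3 ^ 3 +
    C (3 : ℂ) * X 0 ^ 6 * X 1 ^ 5 * X 2 ^ 0 * X 3 ^ 4 +
    C (1 : ℂ) * X 0 ^ 6 * X 1 ^ 4 * X 2 ^ 5 * X 3 ^ 0 +
    C (-7 : ℂ) * X 0 ^ 6 * X 1 ^ 4 * X 2 ^ 4 * X 3 ^ 1 +
    C (-9 : ℂ) * X 0 ^ 6 * X 1 ^ 4 * X 2 ^ 3 * X 3 ^ 2 +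
    C (9 : ℂ) * X 0 ^ 6 * X 1 ^ 4 * X 2 ^ 1 * X 3 ^ 4 +
    C (6 : ℂ) * X 0 ^ 6 * X 1 ^ 4 * X 2 ^ 0 * X 3 ^ 5 +
    C (3 : ℂ) * X 0 ^ 6 * X 1 ^ 3 * X 2 ^ 6 * X 3 ^ 0 +
    C (4 : ℂ) * X 0 ^ 6 * X 1 ^ 3 * X 2 ^ 5 * X 3 ^ 1 +
    C (-4 : ℂ) * X 0 ^ 6 * X 1 ^ 3 * X 2 ^ 4 * X 3 ^ 2

def hp3 : MvPolynomial (Fin 4) ℂ :=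
    C (2 : ℂ) * X 0 ^ 6 * X 1 ^ 3 * X 2 ^ 3 * X 3 ^ 3 +
    C (3 : ℂ) * X 0 ^ 6 * X 1 ^ 3 * X 2 ^ 2 * X 3 ^ 4 +
    C (9 : ℂ) * X 0 ^ 6 * X 1 ^ 3 * X 2 ^ 1 * X 3 ^ 5 +
    C (2 : ℂ) * X 0 ^ 6 * X 1 ^ 3 * X 2 ^ 0 * X 3 ^ 6 +
    C (-1 : ℂ) * X 0 ^ 6 * X 1 ^ 2 * X 2 ^ 7 * X 3 ^ 0 +
    C (1 : ℂ) * X 0 ^ 6 * X 1 ^ 2 * X 2 ^ 6 * X 3 ^ 1 +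
    C (-3 : ℂ) * X 0 ^ 6 * X 1 ^ 2 * X 2 ^ 4 * X 3 ^ 3 +
    C (-5 : ℂ) * X 0 ^ 6 * X 1 ^ 2 * X 2 ^ 3 * X 3 ^ 4 +
    C (-2 : ℂ) * X 0 ^ 6 * X 1 ^ 2 * X 2 ^ 2 * X 3 ^ 5 +
    C (-1 : ℂ) * X 0 ^ 5 * X 1 ^ 8 * X 2 ^ 2 * X 3 ^ 0 +
    C (-2 : ℂ) * X 0 ^ 5 * X 1 ^ 8 * X 2 ^ 1 * X 3 ^ 1 +
    C (-1 : ℂ) * X 0 ^ 5 * X 1 ^ 8 * X 2 ^ 0 * X 3 ^ 2 +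
    C (-4 : ℂ) * X 0 ^ 5 * X 1 ^ 7 * X 2 ^ 2 * X 3 ^ 1 +
    C (-2 : ℂ) * X 0 ^ 5 * X 1 ^ 7 * X 2 ^ 1 * X 3 ^ 2 +
    C (2 : ℂ) * X 0 ^ 5 * X 1 ^ 7 * X 2 ^ 0 * X 3 ^ 3 +
    C (3 : ℂ) * X 0 ^ 5 * X 1 ^ 6 * X 2 ^ 4 * X 3 ^ 0 +
    C (12 : ℂ) * X 0 ^ 5 * X 1 ^ 6 * X 2 ^ 3 * X 3 ^ 1 +
    C (1 : ℂ) * X 0 ^ 5 * X 1 ^ 6 * X 2 ^ 2 * X 3 ^ 2 +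
    C (-10 : ℂ) * X 0 ^ 5 * X 1 ^ 6 * X 2 ^ 1 * X 3 ^ 3 +
    C (-9 : ℂ) * X 0 ^ 5 * X 1 ^ 6 * X 2 ^ 0 * X 3 ^ 4 +
    C (-1 : ℂ) * X 0 ^ 5 * X 1 ^ 5 * X 2 ^ 5 * X 3 ^ 0 +
    C (-7 : ℂ) * X 0 ^ 5 * X 1 ^ 5 * X 2 ^ 4 * X 3 ^ 1

def hp4 : MvPolynomial (Fin 4) ℂ :=
    C (-7 : ℂ) * X 0 ^ 5 * X 1 ^ 5 * X 2 ^ 1 * X 3 ^ 4 +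
    C (-1 : ℂ) * X 0 ^ 5 * X 1 ^ 5 * X 2 ^ 0 * X 3 ^ 5 +
    C (-2 : ℂ) * X 0 ^ 5 * X 1 ^ 4 * X 2 ^ 6 * X 3 ^ 0 +
    C (1 : ℂ) * X 0 ^ 5 * X 1 ^ 4 * X 2 ^ 4 * X 3 ^ 2 +
    C (4 : ℂ) * X 0 ^ 5 * X 1 ^ 4 * X 2 ^ 3 * X 3 ^ 3 +
    C (-5 : ℂ) * X 0 ^ 5 * X 1 ^ 4 * X 2 ^ 2 * X 3 ^ 4 +
    C (1 : ℂ) * X 0 ^ 5 * X 1 ^ 4 * X 2 ^ 1 * X 3 ^ 5 +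
    C (-1 : ℂ) * X 0 ^ 5 * X 1 ^ 4 * X 2 ^ 0 * X 3 ^ 6 +
    C (1 : ℂ) * X 0 ^ 5 * X 1 ^ 3 * X 2 ^ 7 * X 3 ^ 0 +
    C (1 : ℂ) * X 0 ^ 5 * X 1 ^ 3 * X 2 ^ 6 * X 3 ^ 1 +
    C (-1 : ℂ) * X 0 ^ 5 * X 1 ^ 3 * X 2 ^ 5 * X 3 ^ 2 +
    C (3 : ℂ) * X 0 ^ 5 * X 1 ^ 3 * X 2 ^ 4 * X 3 ^ 3 +
    C (-3 : ℂ) * X 0 ^ 5 * X 1 ^ 3 * X 2 ^ 2 * X 3 ^ 5 +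
    C (-2 : ℂ) * X 0 ^ 5 * X 1 ^ 3 * X 2 ^ 1 * X 3 ^ 6 +
    C (-1 : ℂ) * X 0 ^ 5 * X 1 ^ 3 * X 2 ^ 0 * X 3 ^ 7 +
    C (-1 : ℂ) * X 0 ^ 4 * X 1 ^ 9 * X 2 ^ 2 * X 3 ^ 0 +
    C (-2 : ℂ) * X 0 ^ 4 * X 1 ^ 9 * X 2 ^ 1 * X 3 ^ 1 +
    C (-1 : ℂ) * X 0 ^ 4 * X 1 ^ 9 * X 2 ^ 0 * X 3 ^ 2 +
    C (3 : ℂ) * X 0 ^ 4 * X 1 ^ 8 * X 2 ^ 3 * X 3 ^ 0 +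
    C (7 : ℂ) * X 0 ^ 4 * X 1 ^ 8 * X 2 ^ 2 * X 3 ^ 1 +
    C (9 : ℂ) * X 0 ^ 4 * X 1 ^ 8 * X 2 ^ 1 * X 3 ^ 2 +
    C (5 : ℂ) * X 0 ^ 4 * X 1 ^ 8 * X 2 ^ 0 * X 3 ^ 3

def hp5 : MvPolynomial (Fin 4) ℂ :=
    C (-6 : ℂ) * X 0 ^ 4 * X 1 ^ 7 * X 2 ^ 4 * X 3 ^ 0 +
    C (-15 : ℂ) * X 0 ^ 4 * X 1 ^ 7 * X 2 ^ 3 * X 3 ^ 1 +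
    C (-10 : ℂ) * X 0 ^ 4 * X 1 ^ 7 * X 2 ^ 2 * X 3 ^ 2 +
    C (5 : ℂ) * X 0 ^ 4 * X 1 ^ 7 * X 2 ^ 1 * X 3 ^ 3 +
    C (1 : ℂ) * X 0 ^ 4 * X 1 ^ 7 * X 2 ^ 0 * X 3 ^ 4 +
    C (6 : ℂ) * X 0 ^ 4 * X 1 ^ 6 * X 2 ^ 5 * X 3 ^ 0 +
    C (9 : ℂ) * X 0 ^ 4 * X 1 ^ 6 * X 2 ^ 4 * X 3 ^ 1 +
    C (-9 : ℂ) * X 0 ^ 4 * X 1 ^ 6 * X 2 ^ 2 * X 3 ^ 3 +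
    C (-7 : ℂ) * X 0 ^ 4 * X 1 ^ 6 * X 2 ^ 1 * X 3 ^ 4 +
    C (1 : ℂ) * X 0 ^ 4 * X 1 ^ 6 * X 2 ^ 0 * X 3 ^ 5 +
    C (-1 : ℂ) * X 0 ^ 4 * X 1 ^ 5 * X 2 ^ 6 * X 3 ^ 0 +
    C (1 : ℂ) * X 0 ^ 4 * X 1 ^ 5 * X 2 ^ 5 * X 3 ^ 1 +
    C (-5 : ℂ) * X 0 ^ 4 * X 1 ^ 5 * X 2 ^ 4 * X 3 ^ 2 +
    C (4 : ℂ) * X 0 ^ 4 * X 1 ^ 5 * X 2 ^ 3 * X 3 ^ 3 +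
    C (1 : ℂ) * X 0 ^ 4 * X 1 ^ 5 * X 2 ^ 2 * X 3 ^ 4 +
    C (-2 : ℂ) * X 0 ^ 4 * X 1 ^ 5 * X 2 ^ 0 * X 3 ^ 6 +
    C (-1 : ℂ) * X 0 ^ 4 * X 1 ^ 4 * X 2 ^ 7 * X 3 ^ 0 +
    C (3 : ℂ) * X 0 ^ 4 * X 1 ^ 4 * X 2 ^ 5 * X 3 ^ 2 +
    C (1 : ℂ) * X 0 ^ 4 * X 1 ^ 4 * X 2 ^ 4 * X 3 ^ 3 +
    C (1 : ℂ) * X 0 ^ 4 * X 1 ^ 4 * X 2 ^ 3 * X 3 ^ 4 +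
    C (3 : ℂ) * X 0 ^ 4 * X 1 ^ 4 * X 2 ^ 2 * X 3 ^ 5 +
    C (-1 : ℂ) * X 0 ^ 4 * X 1 ^ 4 * X 2 ^ 0 * X 3 ^ 7

def hp6 : MvPolynomial (Fin 4) ℂ :=
    C (2 : ℂ) * X 0 ^ 3 * X 1 ^ 9 * X 2 ^ 1 * X 3 ^ 2 +
    C (2 : ℂ) * X 0 ^ 3 * X 1 ^ 9 * X 2 ^ 0 * X 3 ^ 3 +
    C (3 : ℂ) * X 0 ^ 3 * X 1 ^ 8 * X 2 ^ 3 * X 3 ^ 1 +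
    C (3 : ℂ) * X 0 ^ 3 * X 1 ^ 8 * X 2 ^ 2 * X 3 ^ 2 +
    C (-3 : ℂ) * X 0 ^ 3 * X 1 ^ 8 * X 2 ^ 1 * X 3 ^ 3 +
    C (-6 : ℂ) * X 0 ^ 3 * X 1 ^ 8 * X 2 ^ 0 * X 3 ^ 4 +
    C (-1 : ℂ) * X 0 ^ 3 * X 1 ^ 7 * X 2 ^ 5 * X 3 ^ 0 +
    C (-10 : ℂ) * X 0 ^ 3 * X 1 ^ 7 * X 2 ^ 4 * X 3 ^ 1 +
    C (-6 : ℂ) * X 0 ^ 3 * X 1 ^ 7 * X 2 ^ 3 * X 3 ^ 2 +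
    C (8 : ℂ) * X 0 ^ 3 * X 1 ^ 7 * X 2 ^ 2 * X 3 ^ 3 +
    C (1 : ℂ) * X 0 ^ 3 * X 1 ^ 7 * X 2 ^ 1 * X 3 ^ 4 +
    C (2 : ℂ) * X 0 ^ 3 * X 1 ^ 6 * X 2 ^ 6 * X 3 ^ 0 +
    C (9 : ℂ) * X 0 ^ 3 * X 1 ^ 6 * X 2 ^ 5 * X 3 ^ 1 +
    C (3 : ℂ) * X 0 ^ 3 * X 1 ^ 6 * X 2 ^ 4 * X 3 ^ 2 +
    C (2 : ℂ) * X 0 ^ 3 * X 1 ^ 6 * X 2 ^ 3 * X 3 ^ 3 +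
    C (-4 : ℂ) * X 0 ^ 3 * X 1 ^ 6 * X 2 ^ 2 * X 3 ^ 4 +
    C (4 : ℂ) * X 0 ^ 3 * X 1 ^ 6 * X 2 ^ 1 * X 3 ^ 5 +
    C (3 : ℂ) * X 0 ^ 3 * X 1 ^ 6 * X 2 ^ 0 * X 3 ^ 6 +
    C (-1 : ℂ) * X 0 ^ 3 * X 1 ^ 5 * X 2 ^ 7 * X 3 ^ 0 +
    C (-2 : ℂ) * X 0 ^ 3 * X 1 ^ 5 * X 2 ^ 6 * X 3 ^ 1 +
    C (-3 : ℂ) * X 0 ^ 3 * X 1 ^ 5 * X 2 ^ 5 * X 3 ^ 2 +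
    C (3 : ℂ) * X 0 ^ 3 * X 1 ^ 5 * X 2 ^ 3 * X 3 ^ 4

def hp7 : MvPolynomial (Fin 4) ℂ :=
    C (-1 : ℂ) * X 0 ^ 3 * X 1 ^ 5 * X 2 ^ 2 * X 3 ^ 5 +
    C (1 : ℂ) * X 0 ^ 3 * X 1 ^ 5 * X 2 ^ 1 * X 3 ^ 6 +
    C (1 : ℂ) * X 0 ^ 3 * X 1 ^ 5 * X 2 ^ 0 * X 3 ^ 7 +
    C (-1 : ℂ) * X 0 ^ 2 * X 1 ^ 9 * X 2 ^ 0 * X 3 ^ 4 +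
    C (-7 : ℂ) * X 0 ^ 2 * X 1 ^ 8 * X 2 ^ 2 * X 3 ^ 3 +
    C (-9 : ℂ) * X 0 ^ 2 * X 1 ^ 8 * X 2 ^ 1 * X 3 ^ 4 +
    C (2 : ℂ) * X 0 ^ 2 * X 1 ^ 7 * X 2 ^ 4 * X 3 ^ 2 +
    C (14 : ℂ) * X 0 ^ 2 * X 1 ^ 7 * X 2 ^ 3 * X 3 ^ 3 +
    C (7 : ℂ) * X 0 ^ 2 * X 1 ^ 7 * X 2 ^ 2 * X 3 ^ 4 +
    C (1 : ℂ) * X 0 ^ 2 * X 1 ^ 7 * X 2 ^ 1 * X 3 ^ 5 +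
    C (-1 : ℂ) * X 0 ^ 2 * X 1 ^ 7 * X 2 ^ 0 * X 3 ^ 6 +
    C (-2 : ℂ) * X 0 ^ 2 * X 1 ^ 6 * X 2 ^ 5 * X 3 ^ 2 +
    C (-5 : ℂ) * X 0 ^ 2 * X 1 ^ 6 * X 2 ^ 4 * X 3 ^ 3 +
    C (-3 : ℂ) * X 0 ^ 2 * X 1 ^ 6 * X 2 ^ 3 * X 3 ^ 4 +
    C (1 : ℂ) * X 0 ^ 2 * X 1 ^ 6 * X 2 ^ 1 * X 3 ^ 6 +
    C (-1 : ℂ) * X 0 ^ 2 * X 1 ^ 6 * X 2 ^ 0 * X 3 ^ 7 +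
    C (5 : ℂ) * X 0 ^ 1 * X 1 ^ 8 * X 2 ^ 1 * X 3 ^ 5 +
    C (3 : ℂ) * X 0 ^ 1 * X 1 ^ 8 * X 2 ^ 0 * X 3 ^ 6 +
    C (-1 : ℂ) * X 0 ^ 1 * X 1 ^ 7 * X 2 ^ 3 * X 3 ^ 4 +
    C (-4 : ℂ) * X 0 ^ 1 * X 1 ^ 7 * X 2 ^ 2 * X 3 ^ 5 +
    C (-1 : ℂ) * X 0 ^ 1 * X 1 ^ 7 * X 2 ^ 1 * X 3 ^ 6 +
    C (-1 : ℂ) * X 0 ^ 0 * X 1 ^ 8 * X 2 ^ 0 * X 3 ^ 7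

def hpoly : MvPolynomial (Fin 4) ℂ := hp0 + hp1 + hp2 + hp3 + hp4 + hp5 + hp6 + hp7

lemma homTerm {n a b c d : ℕ} (r : ℂ) (hn : a + b + c + d = n) :
    (C r * X 0 ^ a * X 1 ^ b * X 2 ^ c * X 3 ^ d : MvPolynomial (Fin 4) ℂ).IsHomogeneous n := by
  subst hn
  simpa using ((((isHomogeneous_C (Fin 4) r).mul ((isHomogeneous_X ℂ 0).pow a)).mul
    ((isHomogeneous_X ℂ 1).pow b)).mul ((isHomogeneous_X ℂ 2).pow c)).mul
    ((isHomogeneous_X ℂ 3).pow d)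

lemma Gphi_eq0 : Gphi 0 =
    C (-1 : ℂ) * X 0 ^ 2 * X 1 ^ 1 * X 2 ^ 1 * X 3 ^ 0 +
    C (-1 : ℂ) * X 0 ^ 2 * X 1 ^ 1 * X 2 ^ 0 * X 3 ^ 1 +
    C (1 : ℂ) * X 0 ^ 2 * X 1 ^ 0 * X 2 ^ 2 * X 3 ^ 0 +
    C (1 : ℂ) * X 0 ^ 1 * X 1 ^ 1 * X 2 ^ 0 * X 3 ^ 2 := by
  have : Gphi 0 = Gminor 0 := rfl
  rw [this, Gminor, Matrix.det_fin_three]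
  simp [Gmat, Matrix.submatrix_apply, show ((0:Fin 4).succAbove 0) = 1 from rfl,
    show ((0:Fin 4).succAbove 1) = 2 from rfl, show ((0:Fin 4).succAbove 2) = 3 from rfl,
    Matrix.vecHead, Matrix.vecTail, map_neg, map_one]
  ring

lemma Gphi_eq1 : Gphi 1 =
    C (-1 : ℂ) * X 0 ^ 1 * X 1 ^ 2 * X 2 ^ 1 * X 3 ^ 0 +
    C (-1 : ℂ) * X 0 ^ 1 * X 1 ^ 2 * X 2 ^ 0 * X 3 ^ 1 +
    C (1 : ℂ) * X 0 ^ 1 * X 1 ^ 1 * X 2 ^ 2 * X 3 ^ 0 +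
    C (1 : ℂ) * X 0 ^ 0 * X 1 ^ 2 * X 2 ^ 0 * X 3 ^ 2 := by
  have : Gphi 1 = -Gminor 1 := rfl
  rw [this, Gminor, Matrix.det_fin_three]
  simp [Gmat, Matrix.submatrix_apply, show ((1:Fin 4).succAbove 0) = 0 from rfl,
    show ((1:Fin 4).succAbove 1) = 2 from rfl, show ((1:Fin 4).succAbove 2) = 3 from rfl,
    Matrix.vecHead, Matrix.vecTail, map_neg, map_one]
  ring

lemma Gphi_eq2 : Gphi 2 =
    C (1 : ℂ) * X 0 ^ 3 * X 1 ^ 1 * X 2 ^ 0 * X 3 ^ 0 +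
    C (-1 : ℂ) * X 0 ^ 3 * X 1 ^ 0 * X 2 ^ 1 * X 3 ^ 0 +
    C (1 : ℂ) * X 0 ^ 2 * X 1 ^ 1 * X 2 ^ 0 * X 3 ^ 1 +
    C (1 : ℂ) * X 0 ^ 2 * X 1 ^ 0 * X 2 ^ 0 * X 3 ^ 2 +
    C (1 : ℂ) * X 0 ^ 1 * X 1 ^ 3 * X 2 ^ 0 * X 3 ^ 0 +
    C (-1 : ℂ) * X 0 ^ 1 * X 1 ^ 2 * X 2 ^ 1 * X 3 ^ 0 +
    C (-1 : ℂ) * X 0 ^ 1 * X 1 ^ 2 * X 2 ^ 0 * X 3 ^ 1 +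
    C (-1 : ℂ) * X 0 ^ 0 * X 1 ^ 2 * X 2 ^ 1 * X 3 ^ 1 := by
  have : Gphi 2 = Gminor 2 := rfl
  rw [this, Gminor, Matrix.det_fin_three]
  simp [Gmat, Matrix.submatrix_apply, show ((2:Fin 4).succAbove 0) = 0 from rfl,
    show ((2:Fin 4).succAbove 1) = 1 from rfl, show ((2:Fin 4).succAbove 2) = 3 from rfl,
    Matrix.vecHead, Matrix.vecTail, map_neg, map_one]
  ring

lemma Gphi_eq3 : Gphi 3 =
    C (1 : ℂ) * X 0 ^ 3 * X 1 ^ 1 * X 2 ^ 0 * X 3 ^ 0 +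
    C (-1 : ℂ) * X 0 ^ 2 * X 1 ^ 1 * X 2 ^ 1 * X 3 ^ 0 +
    C (-1 : ℂ) * X 0 ^ 2 * X 1 ^ 1 * X 2 ^ 0 * X 3 ^ 1 +
    C (-1 : ℂ) * X 0 ^ 2 * X 1 ^ 0 * X 2 ^ 1 * X 3 ^ 1 +
    C (1 : ℂ) * X 0 ^ 1 * X 1 ^ 3 * X 2 ^ 0 * X 3 ^ 0 +
    C (1 : ℂ) * X 0 ^ 1 * X 1 ^ 2 * X 2 ^ 1 * X 3 ^ 0 +
    C (-1 : ℂ) * X 0 ^ 0 * X 1 ^ 3 * X 2 ^ 0 * X 3 ^ 1 +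
    C (1 : ℂ) * X 0 ^ 0 * X 1 ^ 2 * X 2 ^ 2 * X 3 ^ 0 := by
  have : Gphi 3 = -Gminor 3 := rfl
  rw [this, Gminor, Matrix.det_fin_three]
  simp [Gmat, Matrix.submatrix_apply, show ((3:Fin 4).succAbove 0) = 0 from rfl,
    show ((3:Fin 4).succAbove 1) = 1 from rfl, show ((3:Fin 4).succAbove 2) = 2 from rfl,
    Matrix.vecHead, Matrix.vecTail, map_neg, map_one]
  ring

lemma key0 : aeval Gphi psi0 = hpoly * X 0 := by
  unfold psi0 hpoly hp0 hp1 hp2 hp3 hp4 hp5 hp6 hp7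
  simp only [map_add, map_mul, map_pow, aeval_X, aeval_C, MvPolynomial.algebraMap_eq]
  rw [Gphi_eq0, Gphi_eq1, Gphi_eq2, Gphi_eq3]
  simp only [map_neg, map_ofNat, map_one]
  ring

lemma key1 : aeval Gphi psi1 = hpoly * X 1 := by
  unfold psi1 hpoly hp0 hp1 hp2 hp3 hp4 hp5 hp6 hp7
  simp only [map_add, map_mul, map_pow, aeval_X, aeval_C, MvPolynomial.algebraMap_eq]
  rw [Gphi_eq0, Gphi_eq1, Gphi_eq2, Gphi_eq3]
  simp only [map_neg, map_ofNat, map_one]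
  ring

lemma key2 : aeval Gphi psi2 = hpoly * X 2 := by
  unfold psi2 hpoly hp0 hp1 hp2 hp3 hp4 hp5 hp6 hp7
  simp only [map_add, map_mul, map_pow, aeval_X, aeval_C, MvPolynomial.algebraMap_eq]
  rw [Gphi_eq0, Gphi_eq1, Gphi_eq2, Gphi_eq3]
  simp only [map_neg, map_ofNat, map_one]
  ring

lemma key3 : aeval Gphi psi3 = hpoly * X 3 := by
  unfold psi3 hpoly hp0 hp1 hp2 hp3 hp4 hp5 hp6 hp7
  simp only [map_add, map_mul, map_pow, aeval_X, aeval_C, MvPolynomial.algebraMap_eq]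
  rw [Gphi_eq0, Gphi_eq1, Gphi_eq2, Gphi_eq3]
  simp only [map_neg, map_ofNat, map_one]
  ring

lemma hpoly_hom : hpoly.IsHomogeneous 15 := by
  unfold hpoly hp0 hp1 hp2 hp3 hp4 hp5 hp6 hp7
  repeat' apply MvPolynomial.IsHomogeneous.add
  all_goals exact homTerm _ (by norm_num)

lemma hpoly_ne : hpoly ≠ 0 := by
  intro h0
  have := congrArg (MvPolynomial.eval ![(1:ℂ), 1, 2, 3]) h0
  unfold hpoly hp0 hp1 hp2 hp3 hp4 hp5 hp6 hp7 at this
  simp only [map_add, map_mul, map_pow, eval_X, eval_C, map_zero,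
    Matrix.cons_val_zero, Matrix.cons_val_one, Matrix.head_cons,
    Matrix.cons_val_two, Matrix.cons_val_three, Matrix.tail_cons] at this
  norm_num at this

lemma psi0_hom : (psi0).IsHomogeneous 4 := by
  unfold psi0
  repeat' apply MvPolynomial.IsHomogeneous.add
  all_goals exact homTerm _ (by norm_num)

lemma psi1_hom : (psi1).IsHomogeneous 4 := by
  unfold psi1
  repeat' apply MvPolynomial.IsHomogeneous.add
  all_goals exact homTerm _ (by norm_num)

lemma psi2_hom : (psi2).IsHomogeneous 4 := by
  unfold psi2
  repeat' apply MvPolynomial.IsHomogeneous.add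
  all_goals exact homTerm _ (by norm_num)

lemma psi3_hom : (psi3).IsHomogeneous 4 := by
  unfold psi3
  repeat' apply MvPolynomial.IsHomogeneous.add
  all_goals exact homTerm _ (by norm_num)

/-- the rational map of `ℙ₃` given by the signed maximal minors of `G` is a
birational transformation whose inverse is also given by quartic polynomials: there is a
quartic map `ψ` and a nonzero homogeneous polynomial `h` of degree 15 with
`ψ ∘ φ = (h·z₀ : h·z₁ : h·z₂ : h·z₃)`. -/
theorem determinantal_quarto_quartic_explicit :
    ∃ (ψ : Fin 4 → MvPolynomial (Fin 4) ℂ) (h : MvPolynomial (Fin 4) ℂ),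
      (∀ i, (ψ i).IsHomogeneous 4) ∧ h ≠ 0 ∧ h.IsHomogeneous 15 ∧
        ∀ i, MvPolynomial.aeval Gphi (ψ i) = h * X i := by
  refine ⟨![psi0, psi1, psi2, psi3], hpoly, ?_, hpoly_ne, hpoly_hom, ?_⟩
  · intro i
    fin_cases i
    · exact psi0_hom
    · exact psi1_hom
    · exact psi2_hom
    · exact psi3_hom
  · intro i
    fin_cases i
    · exact key0
    · exact key1
    · exact key2
    · exact key3

end
end
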